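/- arXiv:1602.01440 — 3 statements merged into one kernel-verified Lean document; each statement's English description precedes it below -/
import Mathlib

section
/- Let E be a finite-dimensional real inner product space and let w be a linear isometric automorphism of E. Then the determinant of w equals (-1)^(dim E - dim E^w), where E^w = {x ∈ E : w x = x} is the subspace of fixed vectors of w. -/
/-!
Let `F` be the fixed subspace of `w`. Since `⟪y, w x - x⟫ = ⟪w y, w x⟫ - ⟪y, x⟫ = 0` for `y ∈ F`,
the range of `w - 1` lies in `Fᗮ`: thus `w` preserves `Fᗮ` and induces the identity on `E ⧸ Fᗮ`,
so `det w` is the determinant of `w` on `Fᗮ`, where `w` has no nonzero fixed vector. For an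
orthogonal matrix `A` one has `Aᵀ (A - 1) = -(A - 1)ᵀ`, whence `det A = (-1) ^ n` as soon as
`det (A - 1) ≠ 0`.
-/

open Module Submodule LinearMap

namespace Matrix

theorem det_eq_neg_one_pow_card_of_mem_orthogonalGroup {n R : Type*} [Fintype n]
    [DecidableEq n] [CommRing R] [IsDomain R] {A : Matrix n n R}
    (hA : A ∈ orthogonalGroup n R) (hA₁ : (A - 1).det ≠ 0) :
    A.det = (-1) ^ Fintype.card n := by
  have htranspose : Aᵀ * (A - 1) = -(A - 1)ᵀ := by
    rw [Matrix.mul_sub, (mem_orthogonalGroup_iff' n R).mp hA, mul_one, transpose_sub,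
      transpose_one, neg_sub]
  have hdet := congrArg det htranspose
  rw [det_mul, det_transpose, det_neg, det_transpose] at hdet
  exact mul_right_cancel₀ hA₁ hdet

end Matrix

namespace LinearIsometry

section Restrict

variable {R E : Type*} [Ring R] [SeminormedAddCommGroup E] [Module R E]

def restrict (w : E →ₗᵢ[R] E) {K : Submodule R E} (hK : K ≤ K.comap w.toLinearMap) :
    K →ₗᵢ[R] K where
  toLinearMap := w.toLinearMap.restrict hK
  norm_map' x := w.norm_map x

@[simp]
theorem toLinearMap_restrict (w : E →ₗᵢ[R] E) {K : Submodule R E}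
    (hK : K ≤ K.comap w.toLinearMap) :
    (w.restrict hK).toLinearMap = w.toLinearMap.restrict hK :=
  rfl

end Restrict

section RCLike

variable {𝕜 E : Type*} [RCLike 𝕜] [NormedAddCommGroup E] [InnerProductSpace 𝕜 E]

theorem sub_self_mem_orthogonal_ker_sub_id (w : E →ₗᵢ[𝕜] E) (x : E) :
    w x - x ∈ (ker (w.toLinearMap - LinearMap.id))ᗮ := by
  intro y hy
  rw [mem_ker, LinearMap.sub_apply, LinearMap.id_apply, sub_eq_zero, coe_toLinearMap] at hy
  rw [inner_sub_right, ← w.inner_map_map y x, hy, sub_self]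

theorem orthogonal_ker_sub_id_le_comap (w : E →ₗᵢ[𝕜] E) :
    (ker (w.toLinearMap - LinearMap.id))ᗮ ≤
      (ker (w.toLinearMap - LinearMap.id))ᗮ.comap w.toLinearMap := by
  intro x hx
  simpa using add_mem (w.sub_self_mem_orthogonal_ker_sub_id x) hx

theorem mapQ_orthogonal_ker_sub_id_eq_id (w : E →ₗᵢ[𝕜] E) :
    (ker (w.toLinearMap - LinearMap.id))ᗮ.mapQ _ w.toLinearMap
      w.orthogonal_ker_sub_id_le_comap = LinearMap.id := by
  ext x
  exact (Submodule.Quotient.eq _).mpr (w.sub_self_mem_orthogonal_ker_sub_id x)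

theorem ker_restrict_orthogonal_ker_sub_id_sub_id_eq_bot (w : E →ₗᵢ[𝕜] E) :
    ker ((w.restrict w.orthogonal_ker_sub_id_le_comap).toLinearMap - LinearMap.id) = ⊥ := by
  rw [eq_bot_iff]
  rintro ⟨x, hx_perp⟩ hx
  have hx_fixed : x ∈ ker (w.toLinearMap - LinearMap.id) := by
    simpa [sub_eq_zero, Subtype.ext_iff] using hx
  simpa using (orthogonal_disjoint _).le_bot ⟨hx_fixed, hx_perp⟩

end RCLike

variable {E : Type*} [NormedAddCommGroup E] [InnerProductSpace ℝ E] [FiniteDimensional ℝ E]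

theorem det_eq_neg_one_pow_finrank_of_ker_sub_id_eq_bot (w : E →ₗᵢ[ℝ] E)
    (hw : ker (w.toLinearMap - LinearMap.id) = ⊥) :
    LinearMap.det w.toLinearMap = (-1) ^ finrank ℝ E := by
  let b := stdOrthonormalBasis ℝ E
  have hA := (w.toLinearIsometryEquiv rfl).toMatrix_mem_unitaryGroup b b
  rw [← det_toMatrix b.toBasis]
  refine (Matrix.det_eq_neg_one_pow_card_of_mem_orthogonalGroup hA ?_).trans
    (by rw [Fintype.card_fin])
  rw [← toMatrix_id b.toBasis, ← map_sub, det_toMatrix]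
  exact fun h => det_eq_zero_iff_ker_ne_bot.mp h hw

theorem det_eq_neg_one_pow_sub_finrank_ker_sub_id (w : E →ₗᵢ[ℝ] E) :
    LinearMap.det w.toLinearMap =
      (-1) ^ (finrank ℝ E - finrank ℝ (ker (w.toLinearMap - LinearMap.id))) := by
  have hF := w.orthogonal_ker_sub_id_le_comap
  have hrank := (ker (w.toLinearMap - LinearMap.id)).finrank_add_finrank_orthogonal
  rw [LinearMap.det_eq_det_mul_det _ _ hF, w.mapQ_orthogonal_ker_sub_id_eq_id, det_id, mul_one,
    ← toLinearMap_restrict, det_eq_neg_one_pow_finrank_of_ker_sub_id_eq_bot _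
      w.ker_restrict_orthogonal_ker_sub_id_sub_id_eq_bot, ← hrank, Nat.add_sub_cancel_left]

end LinearIsometry

/-- Let `E` be a finite-dimensional real inner product space and `w` a linear isometric
automorphism of `E`. Then `det w = (-1) ^ (dim E - dim E^w)`, where `E^w` is the subspace
of fixed vectors of `w`. -/
theorem det_linearIsometryEquiv_eq_neg_one_pow_sub_finrank_fixed
    {E : Type*} [NormedAddCommGroup E] [InnerProductSpace ℝ E] [FiniteDimensional ℝ E]
    (w : E ≃ₗᵢ[ℝ] E) :
    LinearMap.det (w.toLinearEquiv : E →ₗ[ℝ] E) =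
      (-1 : ℝ) ^
        (Module.finrank ℝ E -
          Module.finrank ℝ
            (LinearMap.ker ((w.toLinearEquiv : E →ₗ[ℝ] E) - LinearMap.id))) :=
  w.toLinearIsometry.det_eq_neg_one_pow_sub_finrank_ker_sub_id
end

section
/- Let V be a real vector space, I a finite nonempty index set, s : I → V an affinely independent family of points, and σ a permutation of I. For each orbit ω of σ acting on I, let c ω = |ω|⁻¹ • ∑_{i ∈ ω} s i be the barycenter of the points indexed by ω. Then the family (c ω), indexed by the set of orbits of σ on I, is affinely independent; in particular the affine subspace it spans has dimension (number of orbits) − 1. -/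
/-!
Write `c ω = ∑ i, μ i • s i` with `μ i = |ω|⁻¹` on the orbit `ω` and `0` off it. Given weights `w`
on the orbits with `∑ w ω = 0` and `∑ w ω • c ω = 0`, the weights `i ↦ w (orbit of i) * μ i` on `I`
also sum to zero and give the zero combination of the `s i`, so they vanish by the affine
independence of `s`; since `μ` sums to `1` on every orbit, `w = 0`. Of `σ` only the partition
of `I` into its (nonempty) orbits matters.
-/

open Finset

theorem AffineIndependent.fiberwise_combination {k V ι κ : Type*} [Ring k] [AddCommGroup V]
    [Module k V] [Fintype ι] [DecidableEq κ] {s : ι → V} (hs : AffineIndependent k s)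
    (f : ι → κ) (μ : ι → k) (hμ : ∀ j, ∑ i with f i = j, μ i = 1) :
    AffineIndependent k fun j ↦ ∑ i with f i = j, μ i • s i := by
  rw [affineIndependent_iff] at hs ⊢
  intro t w hw hwc
  have sum_fiber_smul (j : κ) :
      ∑ i with f i = j, (w (f i) * μ i) • s i = w j • ∑ i with f i = j, μ i • s i := by
    rw [smul_sum]
    exact sum_congr rfl fun i hi ↦ by rw [(mem_filter.1 hi).2, mul_smul]
  have sum_fiber_weights (j : κ) : ∑ i with f i = j, w (f i) * μ i = w j := by
    rw [← mul_one (w j), ← hμ j, mul_sum]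
    exact sum_congr rfl fun i hi ↦ by rw [(mem_filter.1 hi).2]
  have hvanish : ∀ i ∈ ({i | f i ∈ t} : Finset ι), w (f i) * μ i = 0 := by
    refine hs _ _ ?_ ?_
    · rw [← sum_fiberwise_eq_sum_filter]; simpa only [sum_fiber_weights] using hw
    · rw [← sum_fiberwise_eq_sum_filter]; simpa only [sum_fiber_smul] using hwc
  intro j hj
  calc w j = ∑ i with f i = j, w (f i) * μ i := (sum_fiber_weights j).symm
    _ = 0 := sum_eq_zero fun i hi ↦
        hvanish i (mem_filter.2 ⟨mem_univ i, (mem_filter.1 hi).2 ▸ hj⟩)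

theorem AffineIndependent.fiberwise_barycenters {k V ι κ : Type*} [DivisionRing k] [CharZero k]
    [AddCommGroup V] [Module k V] [Fintype ι] [DecidableEq κ] {s : ι → V}
    (hs : AffineIndependent k s) {f : ι → κ} (hf : Function.Surjective f) :
    AffineIndependent k fun j ↦ ((#{i | f i = j} : ℕ) : k)⁻¹ • ∑ i with f i = j, s i := by
  have hcard (j : κ) : ((#{i | f i = j} : ℕ) : k) ≠ 0 := by
    obtain ⟨i, rfl⟩ := hf j
    exact Nat.cast_ne_zero.2 (card_ne_zero_of_mem (mem_filter.2 ⟨mem_univ i, rfl⟩))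
  set n : κ → k := fun j ↦ ((#{i | f i = j} : ℕ) : k)⁻¹
  have on_fiber (j : κ) : ∀ i ∈ ({i | f i = j} : Finset ι), n (f i) = n j :=
    fun i hi ↦ by rw [(mem_filter.1 hi).2]
  convert hs.fiberwise_combination f (fun i ↦ n (f i)) fun j ↦ ?_ with j
  · exact (smul_sum ..).trans (sum_congr rfl fun i hi ↦ by rw [on_fiber j i hi])
  · rw [sum_congr rfl (on_fiber j), sum_const, nsmul_eq_mul, mul_inv_cancel₀ (hcard j)]

theorem AffineIndependent.finrank_vectorSpan_eq_natCard_sub_one {k V P ι : Type*} [DivisionRing k]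
    [AddCommGroup V] [Module k V] [AddTorsor V P] [Finite ι] {p : ι → P}
    (hp : AffineIndependent k p) :
    Module.finrank k (vectorSpan k (Set.range p)) = Nat.card ι - 1 := by
  cases isEmpty_or_nonempty ι
  · simp [Set.range_eq_empty]
  · have := Fintype.ofFinite ι
    rw [Nat.card_eq_fintype_card]
    exact hp.finrank_vectorSpan (Nat.succ_pred_eq_of_pos Fintype.card_pos).symm

theorem MulAction.orbitRel.Quotient.orbit_eq_coe_filter {G α : Type*} [Group G] [MulAction G α]
    [Fintype α] [DecidableEq (orbitRel.Quotient G α)] (ω : orbitRel.Quotient G α) :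
    ω.orbit = ↑({a | (Quotient.mk'' a : orbitRel.Quotient G α) = ω} : Finset α) := by
  ext; simp [mem_orbit]

theorem orbit_barycenters_affineIndependent_general
    {V : Type*} [AddCommGroup V] [Module ℝ V]
    {I : Type*} [Fintype I]
    (s : I → V) (hs : AffineIndependent ℝ s) (σ : Equiv.Perm I)
    (c : MulAction.orbitRel.Quotient (Subgroup.zpowers σ) I → V)
    (hc : ∀ ω, c ω = (Nat.card ω.orbit : ℝ)⁻¹ • ∑ᶠ i ∈ ω.orbit, s i) :
    AffineIndependent ℝ c ∧
      Module.finrank ℝ (vectorSpan ℝ (Set.range c)) =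
        Nat.card (MulAction.orbitRel.Quotient (Subgroup.zpowers σ) I) - 1 := by
  classical
  have hc' : c = fun ω ↦
      ((#{i | Quotient.mk'' i = ω} : ℕ) : ℝ)⁻¹ • ∑ i with Quotient.mk'' i = ω, s i := by
    funext ω
    rw [hc, MulAction.orbitRel.Quotient.orbit_eq_coe_filter, Nat.card_eq_card_toFinset,
      Finset.toFinset_coe, finsum_mem_coe_finset]
  have hindep : AffineIndependent ℝ c := hc' ▸ hs.fiberwise_barycenters Quotient.mk''_surjective
  exact ⟨hindep, hindep.finrank_vectorSpan_eq_natCard_sub_one⟩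

/-- Let `s : I → V` be an affinely independent family in a real vector space and `σ` a
permutation of `I`. For each orbit `ω` of `σ` on `I`, let
`c ω = |ω|⁻¹ • ∑ i ∈ ω, s i` be the barycenter of the points indexed by `ω`. Then the
family of orbit barycenters is affinely independent; in particular the affine subspace
it spans has dimension (number of orbits) − 1. -/
theorem orbit_barycenters_affineIndependent
    {V : Type*} [AddCommGroup V] [Module ℝ V]
    {I : Type*} [Fintype I] [Nonempty I]
    (s : I → V) (hs : AffineIndependent ℝ s) (σ : Equiv.Perm I)
    (c : MulAction.orbitRel.Quotient (Subgroup.zpowers σ) I → V)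
    (hc : ∀ ω, c ω = (Nat.card ω.orbit : ℝ)⁻¹ • ∑ᶠ i ∈ ω.orbit, s i) :
    AffineIndependent ℝ c ∧
      Module.finrank ℝ (vectorSpan ℝ (Set.range c)) =
        Nat.card (MulAction.orbitRel.Quotient (Subgroup.zpowers σ) I) - 1 :=
  orbit_barycenters_affineIndependent_general s hs σ c hc
end

section
/- Let V be a real vector space, I a finite nonempty index set, s : I → V an affinely independent family of points, σ a permutation of I, and T : V → V an affine map with T (s i) = s (σ i) for all i ∈ I. Then the set of fixed points of T inside the affine span of {s i : i ∈ I} equals the affine span of the family of orbit barycenters: {x ∈ affineSpan ℝ (range s) : T x = x} = affineSpan ℝ {c ω : ω orbit of σ on I}, where c ω = |ω|⁻¹ • ∑_{i ∈ ω} s i. -/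
/-!
Write a point `x` of the affine span of the `s i` in barycentric coordinates `w`. Since
`T (s i) = s (σ i)`, the point `T x` has coordinates `w ∘ σ⁻¹`, so by affine independence `x` is
fixed exactly when `w` is constant on the orbits of `σ`. Grouping the terms of `∑ w i • s i` by
orbits then writes `x` as an affine combination of the orbit barycenters, and conversely every
orbit barycenter is fixed by `T` because `σ` permutes each orbit.
-/

open Finset MulAction

section Centroid

variable {k V ι : Type*} [Field k] [CharZero k] [AddCommGroup V] [Module k V]

theorem Finset.centroid_eq_inv_card_smul_sum {t : Finset ι} (ht : t.Nonempty) (p : ι → V) :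
    t.centroid k p = (#t : k)⁻¹ • ∑ i ∈ t, p i := by
  rw [centroid_def, affineCombination_eq_linear_combination _ _ _
    (sum_centroidWeights_eq_one_of_nonempty k t ht), smul_sum]
  rfl

theorem Finset.inv_natCard_smul_finsum_eq_centroid {t : Finset ι} (ht : t.Nonempty) (p : ι → V) :
    (Nat.card (t : Set ι) : k)⁻¹ • ∑ᶠ i ∈ (t : Set ι), p i = t.centroid k p := by
  rw [centroid_eq_inv_card_smul_sum ht, finsum_mem_coe_finset, Nat.card_coe_set_eq,
    Set.ncard_coe_finset]

theorem Finset.sum_smul_eq_sum_smul_centroid {t : Finset ι} {w : ι → k}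
    (hw : ∀ i ∈ t, ∀ j ∈ t, w i = w j) (p : ι → V) :
    ∑ i ∈ t, w i • p i = (∑ i ∈ t, w i) • t.centroid k p := by
  obtain rfl | ⟨j, hj⟩ := t.eq_empty_or_nonempty
  · simp
  have hcard : (#t : k) ≠ 0 := Nat.cast_ne_zero.mpr (card_ne_zero_of_mem hj)
  rw [sum_congr rfl fun i hi ↦ hw i hi j hj, sum_const, nsmul_eq_mul,
    centroid_eq_inv_card_smul_sum ⟨j, hj⟩, smul_smul, mul_comm _ (w j),
    mul_inv_cancel_right₀ hcard, smul_sum]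
  exact sum_congr rfl fun i hi ↦ by rw [hw i hi j hj]

theorem affineCombination_mem_affineSpan_range_centroid_fiber {κ : Type*} [Fintype ι] [Fintype κ]
    [DecidableEq κ] (g : ι → κ) (p : ι → V) {w : ι → k} (hw : ∑ i, w i = 1)
    (hwg : ∀ i j, g i = g j → w i = w j) :
    univ.affineCombination k p w ∈
      affineSpan k (Set.range fun j ↦ ({i | g i = j} : Finset ι).centroid k p) := by
  have hu : ∑ j, ∑ i with g i = j, w i = 1 := by rw [sum_fiberwise]; exact hw
  convert affineCombination_mem_affineSpan hu _ using 1
  rw [affineCombination_eq_linear_combination _ _ _ hw,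
    affineCombination_eq_linear_combination _ _ _ hu, ← sum_fiberwise univ g]
  refine sum_congr rfl fun j _ ↦ sum_smul_eq_sum_smul_centroid ?_ p
  simp only [mem_filter, mem_univ, true_and]
  rintro i rfl i' hi'
  exact hwg i i' hi'.symm

end Centroid

theorem Finset.map_filter_univ_eq_of_apply_eq {ι κ : Type*} [Fintype ι] [DecidableEq κ]
    {g : ι → κ} {σ : Equiv.Perm ι} (hg : ∀ i, g (σ i) = g i) (j : κ) :
    ({i | g i = j} : Finset ι).map σ.toEmbedding = ({i | g i = j} : Finset ι) := by
  have hg' : ∀ i, g (σ.symm i) = g i := fun i ↦ by rw [← hg, Equiv.apply_symm_apply]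
  simp [map_filter, hg']

section AffineMap

variable {k V P ι : Type*} [Field k] [AddCommGroup V] [Module k V] [AddTorsor V P]

theorem AffineMap.map_centroid [CharZero k] (T : P →ᵃ[k] P) {t : Finset ι} (ht : t.Nonempty)
    (p : ι → P) : T (t.centroid k p) = t.centroid k (T ∘ p) := by
  rw [centroid_def, map_affineCombination _ _ _ (sum_centroidWeights_eq_one_of_nonempty k t ht),
    centroid_def]

theorem AffineMap.map_centroid_eq_self_of_map_perm [CharZero k] {T : P →ᵃ[k] P} {p : ι → P}
    {σ : Equiv.Perm ι} (hT : ∀ i, T (p i) = p (σ i)) {t : Finset ι} (ht : t.Nonempty)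
    (hσt : t.map σ.toEmbedding = t) : T (t.centroid k p) = t.centroid k p := by
  rw [T.map_centroid ht, (funext hT : T ∘ p = p ∘ σ), ← Equiv.coe_toEmbedding, ← centroid_map,
    hσt]

theorem AffineIndependent.apply_perm_eq_of_map_affineCombination_eq [Fintype ι] {p : ι → P}
    (hp : AffineIndependent k p) {T : P →ᵃ[k] P} {σ : Equiv.Perm ι}
    (hT : ∀ i, T (p i) = p (σ i)) {w : ι → k} (hw : ∑ i, w i = 1)
    (hfix : T (univ.affineCombination k p w) = univ.affineCombination k p w) (i : ι) :
    w (σ i) = w i := by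
  have hwσ : ∑ i, w (σ i) = 1 := (Equiv.sum_comp σ w).trans hw
  -- `w ∘ σ` and `w` are two barycentric coordinate vectors of the same point for `p ∘ σ`.
  have hcomb : univ.affineCombination k (p ∘ σ) (w ∘ σ) =
      univ.affineCombination k (p ∘ σ) w :=
    calc univ.affineCombination k (p ∘ σ) (w ∘ σ)
        _ = univ.affineCombination k p w := by
          rw [← Equiv.coe_toEmbedding, ← affineCombination_map, map_univ_equiv]
        _ = T (univ.affineCombination k p w) := hfix.symm
        _ = univ.affineCombination k (p ∘ σ) w := by
          rw [map_affineCombination _ _ _ hw, (funext hT : T ∘ p = p ∘ σ)]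
  exact congrFun ((affineIndependent_iff_eq_of_fintype_affineCombination_eq k _).mp
    (hp.comp_embedding σ.toEmbedding) _ _ hwσ hw hcomb) i

end AffineMap

theorem Equiv.Perm.apply_eq_of_mem_orbit_zpowers {ι β : Type*} {σ : Equiv.Perm ι} {w : ι → β}
    (hw : ∀ i, w (σ i) = w i) {i j : ι} (h : j ∈ orbit (Subgroup.zpowers σ) i) : w j = w i := by
  obtain ⟨⟨_, n, rfl⟩, rfl⟩ := h
  change w ((σ ^ n) i) = w i
  induction n using Int.induction_on generalizing i with
  | zero => rfl
  | succ n ih => rw [zpow_add_one, mul_apply, ih, hw]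
  | pred n ih => rw [zpow_sub_one, mul_apply, ih, ← hw, coe_inv, apply_symm_apply]

namespace MulAction.orbitRel.Quotient

variable {G α : Type*} [Group G] [MulAction G α] [Fintype α]
  [DecidableEq (orbitRel.Quotient G α)]

theorem coe_filter_mk_eq_orbit (ω : orbitRel.Quotient G α) :
    (({a | Quotient.mk'' a = ω} : Finset α) : Set α) = ω.orbit := by
  ext
  simp [mem_orbit]

theorem filter_mk_nonempty (ω : orbitRel.Quotient G α) :
    ({a | Quotient.mk'' a = ω} : Finset α).Nonempty :=
  ⟨ω.out, by simp⟩

end MulAction.orbitRel.Quotient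

theorem fixed_points_in_affineSpan_eq_affineSpan_orbit_barycenters_general
    {V : Type*} [AddCommGroup V] [Module ℝ V]
    {I : Type*} [Fintype I]
    (s : I → V) (hs : AffineIndependent ℝ s)
    (σ : Equiv.Perm I) (T : V →ᵃ[ℝ] V) (hT : ∀ i, T (s i) = s (σ i))
    (c : MulAction.orbitRel.Quotient (Subgroup.zpowers σ) I → V)
    (hc : ∀ ω, c ω = (Nat.card ω.orbit : ℝ)⁻¹ • ∑ᶠ i ∈ ω.orbit, s i) :
    {x : V | x ∈ affineSpan ℝ (Set.range s) ∧ T x = x} =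
      (affineSpan ℝ (Set.range c) : Set V) := by
  classical
  have := Fintype.ofFinite (orbitRel.Quotient (Subgroup.zpowers σ) I)
  have hc' : c = fun ω ↦ ({i | Quotient.mk'' i = ω} : Finset I).centroid ℝ s := by
    ext ω
    rw [hc, ← ω.coe_filter_mk_eq_orbit, inv_natCard_smul_finsum_eq_centroid ω.filter_mk_nonempty]
  ext x
  constructor
  · rintro ⟨hx, hTx⟩
    obtain ⟨w, hw, rfl⟩ := eq_affineCombination_of_mem_affineSpan_of_fintype hx
    have hwσ := hs.apply_perm_eq_of_map_affineCombination_eq hT hw hTx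
    rw [SetLike.mem_coe, hc']
    exact affineCombination_mem_affineSpan_range_centroid_fiber _ s hw fun i j hij ↦
      Equiv.Perm.apply_eq_of_mem_orbit_zpowers hwσ (orbitRel_apply.mp (Quotient.eq''.mp hij))
  · intro hx
    have hcs : Set.range c ⊆ affineSpan ℝ (Set.range s) := by
      rw [hc']
      rintro _ ⟨ω, rfl⟩
      exact centroid_mem_affineSpan_of_nonempty ℝ s ω.filter_mk_nonempty
    have hσ : ∀ i, (Quotient.mk'' (σ i) : orbitRel.Quotient (Subgroup.zpowers σ) I) =
        Quotient.mk'' i :=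
      fun i ↦ Quotient.sound' ⟨⟨σ, Subgroup.mem_zpowers σ⟩, rfl⟩
    have hfix : ∀ ω, T (c ω) = c ω := by
      rw [hc']
      exact fun ω ↦ T.map_centroid_eq_self_of_map_perm hT ω.filter_mk_nonempty
        (map_filter_univ_eq_of_apply_eq hσ ω)
    exact ⟨affineSpan_le.mpr hcs hx,
      AffineMap.eqOn_affineSpan (g := AffineMap.id ℝ V) (Set.forall_mem_range.mpr hfix) hx⟩

/-- Let `s : I → V` be an affinely independent family in a real vector space, `σ` a
permutation of `I`, and `T` an affine map with `T (s i) = s (σ i)` for all `i`. Then the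
set of fixed points of `T` inside the affine span of the `s i` equals the affine span of
the family of orbit barycenters `c ω = |ω|⁻¹ • ∑ i ∈ ω, s i`. -/
theorem fixed_points_in_affineSpan_eq_affineSpan_orbit_barycenters
    {V : Type*} [AddCommGroup V] [Module ℝ V]
    {I : Type*} [Fintype I] [Nonempty I]
    (s : I → V) (hs : AffineIndependent ℝ s)
    (σ : Equiv.Perm I) (T : V →ᵃ[ℝ] V) (hT : ∀ i, T (s i) = s (σ i))
    (c : MulAction.orbitRel.Quotient (Subgroup.zpowers σ) I → V)
    (hc : ∀ ω, c ω = (Nat.card ω.orbit : ℝ)⁻¹ • ∑ᶠ i ∈ ω.orbit, s i) :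
    {x : V | x ∈ affineSpan ℝ (Set.range s) ∧ T x = x} =
      (affineSpan ℝ (Set.range c) : Set V) :=
  fixed_points_in_affineSpan_eq_affineSpan_orbit_barycenters_general s hs σ T hT c hc
end
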